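/- The family A(U) := {Ay : y ∈ U} is equicontinuous on [0, h]: for every ε > 0 there exists δ > 0 (independent of y ∈ U) such that for all y ∈ U and all x₁, x₂ ∈ [0, h] with |x₁ − x₂| < δ one has |(Ay)(x₁) − (Ay)(x₂)| < ε. -/

import Mathlib

/-!
The kernel `(x^ρ - t^ρ)^(α-1) t^(ρ-1)` has the explicit primitive `-(x^ρ - t^ρ)^α / (ρα)` in `t`,
and for fixed `t` it is monotone in `x` (increasing if `α ≥ 1`, decreasing if `α ≤ 1`). Splitting
`(Ay)(x₂) - (Ay)(x₁)` at `x₁` and bounding `|f|` by its maximum `C` on the compact set `G`, the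
difference is at most an explicit function `w(x₁, x₂)` that does not depend on `y`, is continuous,
and vanishes on the diagonal. Uniform continuity of `w` on `[0, h]²` then yields `δ`.
-/
open Set MeasureTheory intervalIntegral

theorem intervalIntegral.integral_nonneg_of_forall_Ioo {g : ℝ → ℝ} {a b : ℝ} (hab : a ≤ b)
    (hg : ∀ t ∈ Ioo a b, 0 ≤ g t) : 0 ≤ ∫ t in a..b, g t := by
  refine integral_nonneg_of_ae_restrict hab ?_
  rw [← Measure.restrict_congr_set Ioo_ae_eq_Icc]
  filter_upwards [ae_restrict_mem measurableSet_Ioo] with t ht using hg t ht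

theorem intervalIntegral.abs_integral_mul_le_of_nonneg {g F : ℝ → ℝ} {a b C : ℝ} (hab : a ≤ b)
    (hg : IntervalIntegrable g volume a b) (hg0 : ∀ t ∈ Ioo a b, 0 ≤ g t)
    (hF : ∀ t ∈ Ioo a b, |F t| ≤ C) :
    |∫ t in a..b, g t * F t| ≤ C * ∫ t in a..b, g t := by
  rw [← intervalIntegral.integral_const_mul, ← Real.norm_eq_abs]
  refine norm_integral_le_of_norm_le hab ?_ (hg.const_mul C)
  filter_upwards [(Ioo_ae_eq_Ioc (μ := volume) (a := a) (b := b)).mem_iff] with t ht ht'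
  have ht := ht.2 ht'
  rw [Real.norm_eq_abs, abs_mul, abs_of_nonneg (hg0 t ht), mul_comm C]
  exact mul_le_mul_of_nonneg_left (hF t ht) (hg0 t ht)

theorem intervalIntegral.abs_integral_sub_mul_le {f g F : ℝ → ℝ} {a b C : ℝ} (hab : a ≤ b)
    (hf : IntervalIntegrable f volume a b) (hg : IntervalIntegrable g volume a b)
    (hfg : (∀ t ∈ Ioo a b, f t ≤ g t) ∨ ∀ t ∈ Ioo a b, g t ≤ f t)
    (hF : ∀ t ∈ Ioo a b, |F t| ≤ C) :
    |∫ t in a..b, (g t - f t) * F t| ≤ C * |(∫ t in a..b, g t) - ∫ t in a..b, f t| := by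
  rcases hfg with hfg | hgf
  · have hgf0 : ∀ t ∈ Ioo a b, 0 ≤ g t - f t := fun t ht => sub_nonneg.2 (hfg t ht)
    rw [← integral_sub hg hf, abs_of_nonneg (integral_nonneg_of_forall_Ioo hab hgf0)]
    exact abs_integral_mul_le_of_nonneg hab (hg.sub hf) hgf0 hF
  · have hfg0 : ∀ t ∈ Ioo a b, 0 ≤ f t - g t := fun t ht => sub_nonneg.2 (hgf t ht)
    rw [abs_sub_comm (∫ t in a..b, g t), ← integral_sub hf hg,
      abs_of_nonneg (integral_nonneg_of_forall_Ioo hab hfg0), ← abs_neg, ← integral_neg]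
    simp only [← neg_mul, neg_sub]
    exact abs_integral_mul_le_of_nonneg hab (hf.sub hg) hfg0 hF

theorem Metric.exists_pos_forall_lt_of_continuousOn_of_diag {X : Type*} [PseudoMetricSpace X]
    {s : Set X} (hs : IsCompact s) {w : X → X → ℝ}
    (hw : ContinuousOn (Function.uncurry w) (s ×ˢ s))
    (hdiag : ∀ x ∈ s, w x x = 0) {ε : ℝ} (hε : 0 < ε) :
    ∃ δ > 0, ∀ x₁ ∈ s, ∀ x₂ ∈ s, dist x₁ x₂ < δ → w x₁ x₂ < ε := by
  obtain ⟨δ, hδ, hw⟩ :=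
    Metric.uniformContinuousOn_iff.1 ((hs.prod hs).uniformContinuousOn_of_continuous hw) ε hε
  refine ⟨δ, hδ, fun x₁ hx₁ x₂ hx₂ hd => ?_⟩
  have hclose : dist (x₁, x₂) (x₂, x₂) < δ := by simpa [Prod.dist_eq] using hd
  have := hw (x₁, x₂) ⟨hx₁, hx₂⟩ (x₂, x₂) ⟨hx₂, hx₂⟩ hclose
  rw [Function.uncurry_apply_pair, Function.uncurry_apply_pair, hdiag x₂ hx₂,
    Real.dist_0_eq_abs] at this
  exact (le_abs_self _).trans_lt this

theorem isCompact_setOf_abs_sub_le {T : ℝ → ℝ} (hT : Continuous T) (a b K : ℝ) :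
    IsCompact {p : ℝ × ℝ | p.1 ∈ Icc a b ∧ |p.2 - T p.1| ≤ K} := by
  convert (isCompact_Icc.prod (isCompact_Icc (a := -K) (b := K))).image
    (f := fun q : ℝ × ℝ => (q.1, T q.1 + q.2)) (by fun_prop) using 1
  ext ⟨x, z⟩
  simp only [mem_ofPred_eq, mem_image, Prod.exists, Prod.mk.injEq, mem_prod, abs_le, mem_Icc]
  constructor
  · rintro ⟨hx, hz⟩
    exact ⟨x, z - T x, ⟨hx, by linarith, by linarith⟩, rfl, by ring⟩
  · rintro ⟨x, u, ⟨hx, hu⟩, rfl, rfl⟩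
    simpa using ⟨hx, hu⟩

noncomputable def katugampolaKernel (ρ α x t : ℝ) : ℝ := (x ^ ρ - t ^ ρ) ^ (α - 1) * t ^ (ρ - 1)

/-- The first term is `ρα` times the change of the kernel's integral over `[0, x₁]` when `x₁` is
replaced by `x₂`, the second is `ρα` times the integral of the kernel of `x₂` over `[x₁, x₂]`. -/
noncomputable def katugampolaModulus (ρ α x₁ x₂ : ℝ) : ℝ :=
  |(x₂ ^ ρ) ^ α - (x₂ ^ ρ - x₁ ^ ρ) ^ α - (x₁ ^ ρ) ^ α| + (x₂ ^ ρ - x₁ ^ ρ) ^ α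

section Katugampola

variable {ρ α : ℝ}

theorem katugampolaKernel_nonneg (hρ : 0 ≤ ρ) {x t : ℝ} (ht : 0 ≤ t) (htx : t ≤ x) :
    0 ≤ katugampolaKernel ρ α x t :=
  mul_nonneg (Real.rpow_nonneg (sub_nonneg.2 (Real.rpow_le_rpow ht htx hρ)) _)
    (Real.rpow_nonneg ht _)

theorem katugampolaKernel_mono_of_one_le (hρ : 0 ≤ ρ) (hα : 1 ≤ α) {x₁ x₂ t : ℝ} (ht : 0 ≤ t)
    (htx : t ≤ x₁) (hx : x₁ ≤ x₂) : katugampolaKernel ρ α x₁ t ≤ katugampolaKernel ρ α x₂ t :=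
  mul_le_mul_of_nonneg_right
    (Real.rpow_le_rpow (sub_nonneg.2 (Real.rpow_le_rpow ht htx hρ))
      (sub_le_sub_right (Real.rpow_le_rpow (ht.trans htx) hx hρ) _) (sub_nonneg.2 hα))
    (Real.rpow_nonneg ht _)

/-- Strictly `t < x₁`: at `t = x₁` the kernel of `x₁` is `0 ^ (α - 1) * _ = 0` by convention. -/
theorem katugampolaKernel_anti_of_le_one (hρ : 0 < ρ) (hα : α ≤ 1) {x₁ x₂ t : ℝ} (ht : 0 ≤ t)
    (htx : t < x₁) (hx : x₁ ≤ x₂) : katugampolaKernel ρ α x₂ t ≤ katugampolaKernel ρ α x₁ t :=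
  mul_le_mul_of_nonneg_right
    (Real.rpow_le_rpow_of_nonpos (sub_pos.2 (Real.rpow_lt_rpow ht htx hρ))
      (sub_le_sub_right (Real.rpow_le_rpow (ht.trans htx.le) hx hρ.le) _) (sub_nonpos.2 hα))
    (Real.rpow_nonneg ht _)

theorem hasDerivAt_katugampolaKernel_primitive (hρ : 0 < ρ) (hα : 0 < α) {x t : ℝ} (ht : 0 < t)
    (htx : t < x) :
    HasDerivAt (fun s => -(x ^ ρ - s ^ ρ) ^ α / (ρ * α)) (katugampolaKernel ρ α x t) t := by
  have hinner : HasDerivAt (fun s => x ^ ρ - s ^ ρ) (-(ρ * t ^ (ρ - 1))) t :=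
    (Real.hasDerivAt_rpow_const (Or.inl ht.ne')).const_sub _
  have hpos : 0 < x ^ ρ - t ^ ρ := sub_pos.2 (Real.rpow_lt_rpow ht.le htx hρ)
  refine ((hinner.rpow_const (p := α) (Or.inl hpos.ne')).neg.div_const (ρ * α)).congr_deriv ?_
  unfold katugampolaKernel
  field_simp

theorem continuous_katugampolaKernel_primitive (hρ : 0 ≤ ρ) (hα : 0 ≤ α) (x : ℝ) :
    Continuous fun s => -(x ^ ρ - s ^ ρ) ^ α / (ρ * α) := by
  fun_prop (disch := assumption)

theorem intervalIntegrable_katugampolaKernel (hρ : 0 < ρ) (hα : 0 < α) {a b x : ℝ} (ha : 0 ≤ a)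
    (hab : a ≤ b) (hbx : b ≤ x) : IntervalIntegrable (katugampolaKernel ρ α x) volume a b := by
  rw [intervalIntegrable_iff_integrableOn_Ioc_of_le hab]
  refine integrableOn_deriv_of_nonneg
    (continuous_katugampolaKernel_primitive hρ.le hα.le x).continuousOn
    (fun t ht =>
      hasDerivAt_katugampolaKernel_primitive hρ hα (ha.trans_lt ht.1) (ht.2.trans_le hbx))
    fun t ht => katugampolaKernel_nonneg hρ.le (ha.trans ht.1.le) (ht.2.le.trans hbx)

theorem integral_katugampolaKernel (hρ : 0 < ρ) (hα : 0 < α) {a b x : ℝ} (ha : 0 ≤ a)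
    (hab : a ≤ b) (hbx : b ≤ x) :
    ∫ t in a..b, katugampolaKernel ρ α x t
      = ((x ^ ρ - a ^ ρ) ^ α - (x ^ ρ - b ^ ρ) ^ α) / (ρ * α) := by
  rw [integral_eq_sub_of_hasDerivAt_of_le hab
    (continuous_katugampolaKernel_primitive hρ.le hα.le x).continuousOn
    (fun t ht =>
      hasDerivAt_katugampolaKernel_primitive hρ hα (ha.trans_lt ht.1) (ht.2.trans_le hbx))
    (intervalIntegrable_katugampolaKernel hρ hα ha hab hbx)]
  ring

theorem continuous_katugampolaModulus (hρ : 0 ≤ ρ) (hα : 0 ≤ α) :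
    Continuous (Function.uncurry (katugampolaModulus ρ α)) := by
  unfold katugampolaModulus
  fun_prop (disch := assumption)

theorem katugampolaModulus_self (hα : α ≠ 0) (x : ℝ) : katugampolaModulus ρ α x x = 0 := by
  simp [katugampolaModulus, Real.zero_rpow hα]

theorem abs_integral_katugampolaKernel_mul_sub_le (hρ : 0 < ρ) (hα : 0 < α) {F : ℝ → ℝ}
    {C x₁ x₂ : ℝ} (hF : ContinuousOn F (Icc 0 x₂)) (hFC : ∀ t ∈ Icc 0 x₂, |F t| ≤ C)
    (h₁ : 0 ≤ x₁) (h₁₂ : x₁ ≤ x₂) :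
    |(∫ t in 0..x₂, katugampolaKernel ρ α x₂ t * F t)
        - ∫ t in 0..x₁, katugampolaKernel ρ α x₁ t * F t|
      ≤ C * katugampolaModulus ρ α x₁ x₂ / (ρ * α) := by
  set k₁ := katugampolaKernel ρ α x₁
  set k₂ := katugampolaKernel ρ α x₂
  have hk₁ : IntervalIntegrable k₁ volume 0 x₁ :=
    intervalIntegrable_katugampolaKernel hρ hα le_rfl h₁ le_rfl
  have hk₂ : IntervalIntegrable k₂ volume 0 x₁ :=
    intervalIntegrable_katugampolaKernel hρ hα le_rfl h₁ h₁₂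
  have hk₂' : IntervalIntegrable k₂ volume x₁ x₂ :=
    intervalIntegrable_katugampolaKernel hρ hα h₁ h₁₂ le_rfl
  have hF₁ : ContinuousOn F (uIcc 0 x₁) :=
    hF.mono (by rw [uIcc_of_le h₁]; exact Icc_subset_Icc_right h₁₂)
  have hF₂ : ContinuousOn F (uIcc x₁ x₂) :=
    hF.mono (by rw [uIcc_of_le h₁₂]; exact Icc_subset_Icc_left h₁)
  have hsplit : (∫ t in 0..x₂, k₂ t * F t) - ∫ t in 0..x₁, k₁ t * F t
      = (∫ t in 0..x₁, (k₂ t - k₁ t) * F t) + ∫ t in x₁..x₂, k₂ t * F t := by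
    rw [← integral_add_adjacent_intervals (hk₂.mul_continuousOn hF₁) (hk₂'.mul_continuousOn hF₂)]
    simp only [sub_mul]
    rw [integral_sub (hk₂.mul_continuousOn hF₁) (hk₁.mul_continuousOn hF₁)]
    ring
  have hmono : (∀ t ∈ Ioo 0 x₁, k₁ t ≤ k₂ t) ∨ ∀ t ∈ Ioo 0 x₁, k₂ t ≤ k₁ t := by
    rcases le_total 1 α with hα₁ | hα₁
    · exact Or.inl fun t ht => katugampolaKernel_mono_of_one_le hρ.le hα₁ ht.1.le ht.2.le h₁₂
    · exact Or.inr fun t ht => katugampolaKernel_anti_of_le_one hρ hα₁ ht.1.le ht.2 h₁₂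
  have hhead := abs_integral_sub_mul_le h₁ hk₁ hk₂ hmono
    fun t ht => hFC t ⟨ht.1.le, ht.2.le.trans h₁₂⟩
  have htail := abs_integral_mul_le_of_nonneg h₁₂ hk₂'
    (fun t ht => katugampolaKernel_nonneg hρ.le (h₁.trans ht.1.le) ht.2.le)
    fun t ht => hFC t ⟨h₁.trans ht.1.le, ht.2.le⟩
  rw [integral_katugampolaKernel hρ hα le_rfl h₁ h₁₂,
    integral_katugampolaKernel hρ hα le_rfl h₁ le_rfl] at hhead
  rw [integral_katugampolaKernel hρ hα h₁ h₁₂ le_rfl] at htail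
  simp only [Real.zero_rpow hρ.ne', sub_zero, sub_self, Real.zero_rpow hα.ne', ← sub_div,
    abs_div, abs_of_pos (mul_pos hρ hα)] at hhead htail
  rw [hsplit]
  calc _ ≤ _ := abs_add_le _ _
    _ ≤ _ := add_le_add hhead htail
    _ = C * katugampolaModulus ρ α x₁ x₂ / (ρ * α) := by rw [katugampolaModulus]; ring

theorem abs_add_integral_katugampolaKernel_mul_sub_le (hρ : 0 < ρ) (hα : 0 < α) {T F : ℝ → ℝ}
    {c C x₁ x₂ : ℝ} (hF : ContinuousOn F (Icc 0 x₂)) (hFC : ∀ t ∈ Icc 0 x₂, |F t| ≤ C)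
    (h₁ : 0 ≤ x₁) (h₁₂ : x₁ ≤ x₂) :
    |(T x₁ + c * ∫ t in 0..x₁, katugampolaKernel ρ α x₁ t * F t)
        - (T x₂ + c * ∫ t in 0..x₂, katugampolaKernel ρ α x₂ t * F t)|
      ≤ |T x₁ - T x₂| + |c| * (C * katugampolaModulus ρ α x₁ x₂ / (ρ * α)) := by
  have hI := abs_integral_katugampolaKernel_mul_sub_le hρ hα hF hFC h₁ h₁₂
  calc _ = |(T x₁ - T x₂) - c * ((∫ t in 0..x₂, katugampolaKernel ρ α x₂ t * F t)
        - ∫ t in 0..x₁, katugampolaKernel ρ α x₁ t * F t)| := by ring_nf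
    _ ≤ |T x₁ - T x₂| + |c| * |(∫ t in 0..x₂, katugampolaKernel ρ α x₂ t * F t)
        - ∫ t in 0..x₁, katugampolaKernel ρ α x₁ t * F t| := by rw [← abs_mul]; exact abs_sub _ _
    _ ≤ _ := by gcongr

end Katugampola

theorem stmt11_general
    (ρ α : ℝ) (hρ : 0 < ρ) (hα : 0 < α)
    (m : ℕ)
    (y₀ : ℕ → ℝ) (K hstar : ℝ)
    (T : ℝ → ℝ)
    (hT : ∀ x : ℝ, T x = ∑ k ∈ Finset.range m, x ^ k / (Nat.factorial k) * y₀ k)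
    (f : ℝ → ℝ → ℝ)
    (G : Set (ℝ × ℝ))
    (hG : G = {p : ℝ × ℝ | p.1 ∈ Set.Icc 0 hstar ∧ |p.2 - T p.1| ≤ K})
    (hf : ContinuousOn (fun p : ℝ × ℝ => f p.1 p.2) G)
    (M : ℝ)
    (h : ℝ)
    (hh : h = if M = 0 then hstar
      else min hstar ((K * Real.Gamma (α + 1) * ρ ^ α / M) ^ (1 / α)))
    (A : (ℝ → ℝ) → ℝ → ℝ)
    (hA : ∀ (y : ℝ → ℝ) (x : ℝ), A y x = T x + ρ ^ (1 - α) / Real.Gamma α *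
      ∫ t in (0:ℝ)..x, (x ^ ρ - t ^ ρ) ^ (α - 1) * t ^ (ρ - 1) * f t (y t))
    :
    ∀ ε > (0:ℝ), ∃ δ > (0:ℝ), ∀ y : ℝ → ℝ,
      (ContinuousOn y (Set.Icc 0 h) ∧ ∀ s ∈ Set.Icc 0 h, |y s - T s| ≤ K) →
      ∀ x₁ ∈ Set.Icc 0 h, ∀ x₂ ∈ Set.Icc 0 h, |x₁ - x₂| < δ →
        |A y x₁ - A y x₂| < ε := by
  intro ε hε
  have hTc : Continuous T := by rw [funext hT]; fun_prop
  have hh_le : h ≤ hstar := by rw [hh]; split_ifs <;> simp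
  obtain ⟨C, hC⟩ :=
    (hG ▸ isCompact_setOf_abs_sub_le hTc 0 hstar K).exists_bound_of_continuousOn hf
  set c := ρ ^ (1 - α) / Real.Gamma α
  set w := fun x₁ x₂ => |T x₁ - T x₂| + |c| * (C * katugampolaModulus ρ α x₁ x₂ / (ρ * α))
  have hw : Continuous (Function.uncurry w) := by
    have := continuous_katugampolaModulus hρ.le hα.le
    fun_prop
  obtain ⟨δ, hδ, hwδ⟩ := Metric.exists_pos_forall_lt_of_continuousOn_of_diag
    (isCompact_Icc (a := 0) (b := h)) hw.continuousOn
    (fun x _ => by simp [w, katugampolaModulus_self hα.ne']) hε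
  refine ⟨δ, hδ, fun y ⟨hyc, hyK⟩ => ?_⟩
  have hgraph : MapsTo (fun t => (t, y t)) (Icc 0 h) G := fun t ht =>
    hG ▸ ⟨⟨ht.1, ht.2.trans hh_le⟩, hyK t ht⟩
  have hF : ContinuousOn (fun t => f t (y t)) (Icc 0 h) :=
    hf.comp (continuousOn_id.prodMk hyc) hgraph
  have hFC : ∀ t ∈ Icc 0 h, |f t (y t)| ≤ C := fun t ht => hC _ (hgraph ht)
  have hAw : ∀ x₁ ∈ Icc 0 h, ∀ x₂ ∈ Icc 0 h, x₁ ≤ x₂ → |A y x₁ - A y x₂| ≤ w x₁ x₂ :=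
    fun x₁ hx₁ x₂ hx₂ h₁₂ => by
      rw [hA, hA]
      exact abs_add_integral_katugampolaKernel_mul_sub_le hρ hα
        (hF.mono (Icc_subset_Icc_right hx₂.2)) (fun t ht => hFC t ⟨ht.1, ht.2.trans hx₂.2⟩)
        hx₁.1 h₁₂
  intro x₁ hx₁ x₂ hx₂ hd
  rcases le_total x₁ x₂ with h₁₂ | h₂₁
  · exact (hAw x₁ hx₁ x₂ hx₂ h₁₂).trans_lt (hwδ x₁ hx₁ x₂ hx₂ hd)
  · rw [abs_sub_comm]
    exact (hAw x₂ hx₂ x₁ hx₁ h₂₁).trans_lt (hwδ x₂ hx₂ x₁ hx₁ (by rwa [Real.dist_eq, abs_sub_comm]))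

theorem stmt11
    (ρ α : ℝ) (hρ : 0 < ρ) (hα : 0 < α)
    (m : ℕ) (hm : m = ⌈α⌉₊)
    (y₀ : ℕ → ℝ) (K hstar : ℝ) (hK : 0 < K) (hhstar : 0 < hstar)
    (T : ℝ → ℝ)
    (hT : ∀ x : ℝ, T x = ∑ k ∈ Finset.range m, x ^ k / (Nat.factorial k) * y₀ k)
    (f : ℝ → ℝ → ℝ)
    (G : Set (ℝ × ℝ))
    (hG : G = {p : ℝ × ℝ | p.1 ∈ Set.Icc 0 hstar ∧ |p.2 - T p.1| ≤ K})
    (hf : ContinuousOn (fun p : ℝ × ℝ => f p.1 p.2) G)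
    (M : ℝ) (hM : M = sSup ((fun p : ℝ × ℝ => |f p.1 p.2|) '' G))
    (h : ℝ)
    (hh : h = if M = 0 then hstar
      else min hstar ((K * Real.Gamma (α + 1) * ρ ^ α / M) ^ (1 / α)))
    (A : (ℝ → ℝ) → ℝ → ℝ)
    (hA : ∀ (y : ℝ → ℝ) (x : ℝ), A y x = T x + ρ ^ (1 - α) / Real.Gamma α *
      ∫ t in (0:ℝ)..x, (x ^ ρ - t ^ ρ) ^ (α - 1) * t ^ (ρ - 1) * f t (y t))
    :
    ∀ ε > (0:ℝ), ∃ δ > (0:ℝ), ∀ y : ℝ → ℝ,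
      (ContinuousOn y (Set.Icc 0 h) ∧ ∀ s ∈ Set.Icc 0 h, |y s - T s| ≤ K) →
      ∀ x₁ ∈ Set.Icc 0 h, ∀ x₂ ∈ Set.Icc 0 h, |x₁ - x₂| < δ →
        |A y x₁ - A y x₂| < ε :=
  stmt11_general ρ α hρ hα m y₀ K hstar T hT f G hG hf M h hh A hA
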